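/- arXiv:2208.09986 — 2 statements merged into one kernel-verified Lean document; each statement's English description precedes it below -/
import Mathlib

section
/- Let r ≥ 1, δ ∈ (0, 1), T > 0, and let q₀ : ℝ → [0, ∞) be measurable. Define q(t, z) = (2πt)^{-1/2} ∫_ℝ exp(-|z - z₀|²/(2t)) q₀(z₀) dz₀ for t ∈ (0, T]. If there exists α > 0 such that ∫_ℝ exp(α·z₀²) q₀(z₀)^r dz₀ < ∞, then ∫_ℝ ( ∫₀^T q(t, z)^r dt )^δ dz < ∞. -/
/-! Jensen's inequality for the Gaussian law `N(z, t)`, with density `p_t(z - ·)`, gives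
`q(t, z)^r ≤ ∫ p_t(z - z₀) q₀(z₀)^r dz₀`. For `t ≤ T` the kernel is at most
`(2πt)^(-1/2) exp (-(z - z₀)² / (2T))`, and `c z² ≤ (z - z₀)² / (2T) + α z₀²` for
`c = min (1 / (2T)) α / 2`; hence `∫₀^T q(t, z)^r dt ≤ C exp (-c z²)` with
`C = ∫₀^T (2πt)^(-1/2) dt · ∫ exp (α z₀²) q₀(z₀)^r dz₀ < ∞`, and every positive power of a
Gaussian is integrable. -/

open MeasureTheory ProbabilityTheory Real Set
open scoped ENNReal NNReal

theorem enorm_integral_rpow_le_lintegral_enorm_rpow {α E : Type*} [MeasurableSpace α]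
    [NormedAddCommGroup E] [NormedSpace ℝ E] {μ : Measure α} [IsProbabilityMeasure μ]
    {f : α → E} {r : ℝ} (hr : 1 ≤ r) (hf : AEStronglyMeasurable f μ) :
    ‖∫ x, f x ∂μ‖ₑ ^ r ≤ ∫⁻ x, ‖f x‖ₑ ^ r ∂μ := by
  have hLp := eLpNorm'_le_eLpNorm'_of_exponent_le one_pos hr μ hf
  simp only [eLpNorm', ENNReal.rpow_one, div_one, one_div] at hLp
  rw [← ENNReal.le_rpow_inv_iff (by linarith)]
  exact (enorm_integral_le_lintegral_enorm f).trans hLp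

theorem abs_integral_rpow_le_toReal_lintegral {α : Type*} [MeasurableSpace α] {μ : Measure α}
    {f : α → ℝ} {r : ℝ} (hr : 0 ≤ r) (hfin : ∫⁻ x, ‖f x‖ₑ ^ r ∂μ ≠ ∞) :
    |∫ x, f x ^ r ∂μ| ≤ (∫⁻ x, ‖f x‖ₑ ^ r ∂μ).toReal := by
  refine (norm_integral_le_lintegral_norm (fun x => f x ^ r)).trans (ENNReal.toReal_mono hfin ?_)
  refine lintegral_mono fun x => ?_
  rw [Real.norm_eq_abs, enorm_eq_ofReal_abs, ENNReal.ofReal_rpow_of_nonneg (abs_nonneg _) hr]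
  exact ENNReal.ofReal_le_ofReal (abs_rpow_le_abs_rpow _ _)

theorem half_min_mul_sq_le {a b : ℝ} (ha : 0 ≤ a) (hb : 0 ≤ b) (x y : ℝ) :
    min a b / 2 * x ^ 2 ≤ a * (x - y) ^ 2 + b * y ^ 2 := by
  have hxy : x ^ 2 ≤ 2 * ((x - y) ^ 2 + y ^ 2) := by nlinarith [sq_nonneg (x - 2 * y)]
  nlinarith [min_le_left a b, min_le_right a b, le_min ha hb, sq_nonneg (x - y), sq_nonneg y]

theorem integrableOn_inv_sqrt_mul_Ioc (a T : ℝ) :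
    IntegrableOn (fun t => (√(a * t))⁻¹) (Ioc 0 T) := by
  rcases le_or_gt T 0 with hT | hT
  · simp [Ioc_eq_empty_of_le hT]
  have hpow : IntegrableOn (fun t : ℝ => t ^ (-(1 : ℝ) / 2)) (Ioc 0 T) := by
    rw [integrableOn_Ioc_iff_integrableOn_Ioo, intervalIntegral.integrableOn_Ioo_rpow_iff hT]
    norm_num
  refine IntegrableOn.congr_fun (hpow.const_mul (√a)⁻¹) (fun t ht => ?_) measurableSet_Ioc
  rw [Real.sqrt_mul' a ht.1.le, mul_inv, Real.sqrt_eq_rpow t, ← Real.rpow_neg ht.1.le]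
  norm_num

theorem integrable_rpow_of_abs_le_mul_exp_neg_mul_sq {g : ℝ → ℝ} {A c δ : ℝ} (hδ : 0 < δ)
    (hc : 0 < c) (hA : 0 ≤ A) (hg : AEStronglyMeasurable g)
    (hle : ∀ z, |g z| ≤ A * exp (-c * z ^ 2)) :
    Integrable fun z => g z ^ δ := by
  refine ((integrable_exp_neg_mul_sq (mul_pos hc hδ)).const_mul (A ^ δ)).mono'
    (hg.aemeasurable.pow_const δ).aestronglyMeasurable (Filter.Eventually.of_forall fun z => ?_)
  calc ‖g z ^ δ‖ ≤ |g z| ^ δ := abs_rpow_le_abs_rpow _ _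
    _ ≤ (A * exp (-c * z ^ 2)) ^ δ := by gcongr; exact hle z
    _ = A ^ δ * exp (-(c * δ) * z ^ 2) := by
      rw [mul_rpow hA (exp_nonneg _), ← exp_mul]
      ring_nf

noncomputable def heatFlow (q₀ : ℝ → ℝ) (t z : ℝ) : ℝ :=
  (2 * π * t) ^ (-(1 : ℝ) / 2) * ∫ z₀, exp (-|z - z₀| ^ 2 / (2 * t)) * q₀ z₀

theorem measurable_heatFlow {q₀ : ℝ → ℝ} (hq₀ : Measurable q₀) :
    Measurable (Function.uncurry (heatFlow q₀)) := by
  have hint : StronglyMeasurable fun p : ℝ × ℝ =>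
      ∫ z₀, exp (-|p.2 - z₀| ^ 2 / (2 * p.1)) * q₀ z₀ :=
    StronglyMeasurable.integral_prod_right'
      (f := fun w : (ℝ × ℝ) × ℝ => exp (-|w.1.2 - w.2| ^ 2 / (2 * w.1.1)) * q₀ w.2)
      (Measurable.stronglyMeasurable (by fun_prop))
  exact (by fun_prop : Measurable fun p : ℝ × ℝ => (2 * π * p.1) ^ (-(1 : ℝ) / 2)).mul
    hint.measurable

theorem gaussianPDFReal_toNNReal_eq_rpow_mul_exp {t : ℝ} (ht : 0 < t) (z z₀ : ℝ) :
    gaussianPDFReal z t.toNNReal z₀ =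
      (2 * π * t) ^ (-(1 : ℝ) / 2) * exp (-|z - z₀| ^ 2 / (2 * t)) := by
  rw [gaussianPDFReal, Real.coe_toNNReal _ ht.le, Real.sqrt_eq_rpow,
    ← Real.rpow_neg (by positivity), sq_abs, ← neg_sq (z - z₀), neg_sub]
  norm_num

theorem heatFlow_eq_integral_gaussianReal (q₀ : ℝ → ℝ) {t : ℝ} (ht : 0 < t) (z : ℝ) :
    heatFlow q₀ t z = ∫ z₀, q₀ z₀ ∂gaussianReal z t.toNNReal := by
  rw [integral_gaussianReal_eq_integral_smul (by simpa using ht), heatFlow, ← integral_const_mul]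
  simp only [gaussianPDFReal_toNNReal_eq_rpow_mul_exp ht, smul_eq_mul, mul_assoc]

theorem enorm_heatFlow_rpow_le {q₀ : ℝ → ℝ} (hq₀ : Measurable q₀) {r : ℝ} (hr : 1 ≤ r)
    {t : ℝ} (ht : 0 < t) (z : ℝ) :
    ‖heatFlow q₀ t z‖ₑ ^ r ≤ ∫⁻ z₀, gaussianPDF z t.toNNReal z₀ * ‖q₀ z₀‖ₑ ^ r := by
  have hlint := lintegral_withDensity_eq_lintegral_mul volume (measurable_gaussianPDF z t.toNNReal)
    (g := fun z₀ => ‖q₀ z₀‖ₑ ^ r) (by fun_prop)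
  rw [← gaussianReal_of_var_ne_zero _ (by simpa using ht)] at hlint
  rw [heatFlow_eq_integral_gaussianReal q₀ ht]
  exact (enorm_integral_rpow_le_lintegral_enorm_rpow hr hq₀.aestronglyMeasurable).trans_eq hlint

theorem gaussianPDFReal_le_of_var_le {t T α : ℝ} (ht : 0 < t) (htT : t ≤ T) (hα : 0 ≤ α)
    (z z₀ : ℝ) :
    gaussianPDFReal z t.toNNReal z₀ ≤
      (√(2 * π * t))⁻¹ * exp (-(min (2 * T)⁻¹ α / 2) * z ^ 2) * exp (α * z₀ ^ 2) := by
  have hT : 0 < T := ht.trans_le htT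
  have hsplit := half_min_mul_sq_le (by positivity : 0 ≤ (2 * T)⁻¹) hα z z₀
  have hvar : (2 * T)⁻¹ * (z - z₀) ^ 2 ≤ (z₀ - z) ^ 2 / (2 * t) := by
    rw [← neg_sub, neg_sq, div_eq_inv_mul]
    gcongr
  rw [gaussianPDFReal, Real.coe_toNNReal _ ht.le, mul_assoc _ (exp _), ← exp_add]
  gcongr
  linarith [neg_div (2 * t) ((z₀ - z) ^ 2)]

theorem lintegral_enorm_heatFlow_rpow_le {q₀ : ℝ → ℝ} (hq₀ : Measurable q₀) {r T α : ℝ}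
    (hr : 1 ≤ r) (hα : 0 ≤ α) (z : ℝ) :
    ∫⁻ t in Ioc 0 T, ‖heatFlow q₀ t z‖ₑ ^ r ≤
      (∫⁻ t in Ioc 0 T, ENNReal.ofReal (√(2 * π * t))⁻¹) *
        (∫⁻ z₀, ENNReal.ofReal (exp (α * z₀ ^ 2)) * ‖q₀ z₀‖ₑ ^ r) *
        ENNReal.ofReal (exp (-(min (2 * T)⁻¹ α / 2) * z ^ 2)) := by
  set c := min (2 * T)⁻¹ α / 2
  set M := ∫⁻ z₀, ENNReal.ofReal (exp (α * z₀ ^ 2)) * ‖q₀ z₀‖ₑ ^ r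
  have hfixed : ∀ t ∈ Ioc 0 T, ‖heatFlow q₀ t z‖ₑ ^ r ≤
      ENNReal.ofReal (√(2 * π * t))⁻¹ * (ENNReal.ofReal (exp (-c * z ^ 2)) * M) := by
    intro t ⟨ht, htT⟩
    calc ‖heatFlow q₀ t z‖ₑ ^ r ≤ ∫⁻ z₀, gaussianPDF z t.toNNReal z₀ * ‖q₀ z₀‖ₑ ^ r :=
          enorm_heatFlow_rpow_le hq₀ hr ht z
      _ ≤ ∫⁻ z₀, ENNReal.ofReal (√(2 * π * t))⁻¹ * ENNReal.ofReal (exp (-c * z ^ 2)) *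
            (ENNReal.ofReal (exp (α * z₀ ^ 2)) * ‖q₀ z₀‖ₑ ^ r) := by
          refine lintegral_mono fun z₀ => ?_
          rw [← mul_assoc, ← ENNReal.ofReal_mul (by positivity),
            ← ENNReal.ofReal_mul (by positivity)]
          gcongr
          exact ENNReal.ofReal_le_ofReal (gaussianPDFReal_le_of_var_le ht htT hα z z₀)
      _ = _ := by rw [lintegral_const_mul _ (by fun_prop), mul_assoc]
  calc ∫⁻ t in Ioc 0 T, ‖heatFlow q₀ t z‖ₑ ^ r
      ≤ ∫⁻ t in Ioc 0 T, ENNReal.ofReal (√(2 * π * t))⁻¹ *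
          (ENNReal.ofReal (exp (-c * z ^ 2)) * M) := setLIntegral_mono (by fun_prop) hfixed
    _ = _ := by rw [lintegral_mul_const _ (by fun_prop), mul_comm (ENNReal.ofReal _) M, mul_assoc]

theorem stronglyMeasurable_setIntegral_heatFlow_rpow {q₀ : ℝ → ℝ} (hq₀ : Measurable q₀)
    (r : ℝ) (s : Set ℝ) :
    StronglyMeasurable fun z => ∫ t in s, heatFlow q₀ t z ^ r :=
  StronglyMeasurable.integral_prod_right' (f := fun p : ℝ × ℝ => heatFlow q₀ p.2 p.1 ^ r)
    (((measurable_heatFlow hq₀).comp measurable_swap).pow_const r).stronglyMeasurable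

theorem abs_setIntegral_heatFlow_rpow_le {q₀ : ℝ → ℝ} (hq₀ : Measurable q₀) {r T α : ℝ}
    (hr : 1 ≤ r) (hα : 0 ≤ α)
    (hM : ∫⁻ z₀, ENNReal.ofReal (exp (α * z₀ ^ 2)) * ‖q₀ z₀‖ₑ ^ r ≠ ∞) (z : ℝ) :
    |∫ t in Ioc 0 T, heatFlow q₀ t z ^ r| ≤
      ((∫⁻ t in Ioc 0 T, ENNReal.ofReal (√(2 * π * t))⁻¹) *
        ∫⁻ z₀, ENNReal.ofReal (exp (α * z₀ ^ 2)) * ‖q₀ z₀‖ₑ ^ r).toReal *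
        exp (-(min (2 * T)⁻¹ α / 2) * z ^ 2) := by
  have hbound := lintegral_enorm_heatFlow_rpow_le hq₀ hr hα z (T := T)
  have hκ := (integrableOn_inv_sqrt_mul_Ioc (2 * π) T).lintegral_lt_top.ne
  have hfin := ENNReal.mul_ne_top (ENNReal.mul_ne_top hκ hM)
    (ENNReal.ofReal_ne_top (r := exp (-(min (2 * T)⁻¹ α / 2) * z ^ 2)))
  calc |∫ t in Ioc 0 T, heatFlow q₀ t z ^ r|
      ≤ (∫⁻ t in Ioc 0 T, ‖heatFlow q₀ t z‖ₑ ^ r).toReal :=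
        abs_integral_rpow_le_toReal_lintegral (by linarith) (ne_top_of_le_ne_top hfin hbound)
    _ ≤ _ := ENNReal.toReal_mono hfin hbound
    _ = _ := by rw [ENNReal.toReal_mul, ENNReal.toReal_ofReal (exp_nonneg _)]

theorem stmt_4 (r δ T : ℝ) (hr : 1 ≤ r) (hδ : δ ∈ Set.Ioo (0 : ℝ) 1) (hT : 0 < T)
    (q₀ : ℝ → ℝ) (hq₀m : Measurable q₀) (hq₀0 : ∀ z, 0 ≤ q₀ z)
    (q : ℝ → ℝ → ℝ)
    (hq : ∀ t ∈ Set.Ioc (0 : ℝ) T, ∀ z : ℝ,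
      q t z = (2 * Real.pi * t) ^ (-(1 : ℝ) / 2) *
        ∫ z₀ : ℝ, Real.exp (-|z - z₀| ^ 2 / (2 * t)) * q₀ z₀)
    (hint : ∃ α > (0 : ℝ), Integrable (fun z₀ : ℝ => Real.exp (α * z₀ ^ 2) * q₀ z₀ ^ r)) :
    Integrable (fun z : ℝ => (∫ t in Set.Ioc (0 : ℝ) T, q t z ^ r) ^ δ) := by
  obtain ⟨α, hα, hint⟩ := hint
  have hq_eq : ∀ z, ∫ t in Ioc 0 T, q t z ^ r = ∫ t in Ioc 0 T, heatFlow q₀ t z ^ r := fun z =>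
    setIntegral_congr_fun measurableSet_Ioc fun t ht => by rw [hq t ht z, heatFlow]
  have hM : ∫⁻ z₀, ENNReal.ofReal (exp (α * z₀ ^ 2)) * ‖q₀ z₀‖ₑ ^ r ≠ ∞ := by
    refine ne_top_of_le_ne_top hint.hasFiniteIntegral.ne (lintegral_mono fun z₀ => ?_)
    rw [enorm_mul, Real.enorm_of_nonneg (exp_nonneg _),
      Real.enorm_rpow_of_nonneg (hq₀0 z₀) (by linarith)]
  simp_rw [hq_eq]
  exact integrable_rpow_of_abs_le_mul_exp_neg_mul_sq hδ.1 (by positivity) ENNReal.toReal_nonneg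
    (stronglyMeasurable_setIntegral_heatFlow_rpow hq₀m r _).aestronglyMeasurable
    (abs_setIntegral_heatFlow_rpow_le hq₀m hr hα.le hM)
end

section
/- Let T > 0, s > 1, u > 1 with conjugate u' = u/(u-1), and let f : [0,T] × ℝ × ℝ → [0, ∞) be measurable. Then ∫_ℝ ( ∫₀^T ∫_ℝ f(t,x₁,x₂)^s dx₁ dt )^{1/s} dx₂ ≤ ( ∫₀^T ( sup_{x ∈ ℝ²} f(t,x) )^{(s-1)u} dt )^{1/(su)} · ∫_ℝ ( ∫₀^T ( ∫_ℝ f(t,x₁,x₂) dx₁ )^{u'} dt )^{1/(su')} dx₂. -/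
/-!
Write `M t` for the essential supremum of `f (t, ·)`. Splitting `f ^ s = f ^ (s - 1) * f` and
bounding the first factor by `M t ^ (s - 1)` gives, for a.e. `x₂`,
`∫∫ f ^ s dx₁ dt ≤ ∫ M t ^ (s - 1) * (∫ f dx₁) dt`, and Hölder's inequality in `t` with exponents
`u`, `u'` bounds the right-hand side. The bound `f ≤ M t` holds for every `t` only almost everywhere
in `(x₁, x₂)`; it is the measurability of `M` that makes it a.e. on the triple product, so that it
can be read off in the order `x₂`, `t`, `x₁` in which the integrals are nested.
-/

open MeasureTheory
open scoped ENNReal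

namespace MeasureTheory

variable {α β γ : Type*} [MeasurableSpace α] [MeasurableSpace β] [MeasurableSpace γ]
  {μ : Measure α} {ν : Measure β} {ρ : Measure γ}

theorem essSup_le_iff_measure_lt_eq_zero {g : β → ℝ≥0∞} {c : ℝ≥0∞} :
    essSup g ν ≤ c ↔ ν {y | c < g y} = 0 := by
  refine ⟨fun h => measure_mono_null (fun y hy => h.trans_lt hy) (meas_essSup_lt (f := g)),
    fun h => essSup_le_of_ae_le c ?_⟩
  simpa only [Filter.EventuallyLE, ae_iff, not_le] using h

theorem measurable_essSup_slice [SFinite ν] {F : α × β → ℝ≥0∞} (hF : Measurable F) :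
    Measurable fun x => essSup (fun y => F (x, y)) ν := by
  refine measurable_of_Iic fun c => ?_
  have hlt : MeasurableSet {p : α × β | c < F p} := measurableSet_lt measurable_const hF
  simp only [Set.preimage, Set.mem_Iic, essSup_le_iff_measure_lt_eq_zero]
  exact measurable_measure_prodMk_left hlt (measurableSet_singleton 0)

theorem ae_le_essSup_slice [SFinite ν] {F : α × β → ℝ≥0∞} (hF : Measurable F) :
    ∀ᵐ p ∂μ.prod ν, F p ≤ essSup (fun y => F (p.1, y)) ν := by
  have hmeas : MeasurableSet {p : α × β | F p ≤ essSup (fun y => F (p.1, y)) ν} :=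
    measurableSet_le hF ((measurable_essSup_slice hF).comp measurable_fst)
  exact (Measure.ae_prod_iff_ae_ae hmeas).2 (.of_forall fun _ => ae_le_essSup)

theorem ae_ae_ae_of_ae_prod_prod [SFinite μ] [SFinite ν] [SFinite ρ] {p : α × β × γ → Prop}
    (h : ∀ᵐ q ∂μ.prod (ν.prod ρ), p q) : ∀ᵐ z ∂ρ, ∀ᵐ x ∂μ, ∀ᵐ y ∂ν, p (x, y, z) := by
  have hrot : MeasurePreserving (fun q : γ × α × β => (q.2.1, q.2.2, q.1))
      (ρ.prod (μ.prod ν)) (μ.prod (ν.prod ρ)) :=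
    (measurePreserving_prodAssoc μ ν ρ).comp Measure.measurePreserving_swap
  filter_upwards [Measure.ae_ae_of_ae_prod (hrot.quasiMeasurePreserving.ae h)] with z hz
  exact Measure.ae_ae_of_ae_prod hz

theorem lintegral_rpow_le_rpow_sub_one_mul {g : β → ℝ≥0∞} (hg : AEMeasurable g ν) {M : ℝ≥0∞}
    (hgM : ∀ᵐ y ∂ν, g y ≤ M) {s : ℝ} (hs : 1 ≤ s) :
    ∫⁻ y, g y ^ s ∂ν ≤ M ^ (s - 1) * ∫⁻ y, g y ∂ν := by
  calc ∫⁻ y, g y ^ s ∂ν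
      ≤ ∫⁻ y, M ^ (s - 1) * g y ∂ν := by
        refine lintegral_mono_ae ?_
        filter_upwards [hgM] with y hy
        calc g y ^ s = g y ^ (s - 1) * g y ^ (1 : ℝ) := by
              rw [← ENNReal.rpow_add_of_nonneg _ _ (by linarith) zero_le_one, sub_add_cancel]
            _ ≤ M ^ (s - 1) * g y := by rw [ENNReal.rpow_one]; gcongr
    _ = M ^ (s - 1) * ∫⁻ y, g y ∂ν := lintegral_const_mul'' _ hg

theorem lintegral_lintegral_rpow_le_of_ae_le [SFinite ν] {F : α × β → ℝ≥0∞} (hF : Measurable F)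
    {M : α → ℝ≥0∞} (hM : Measurable M) (hFM : ∀ᵐ x ∂μ, ∀ᵐ y ∂ν, F (x, y) ≤ M x)
    {s u u' : ℝ} (hs : 1 ≤ s) (hu : u.HolderConjugate u') :
    (∫⁻ x, ∫⁻ y, F (x, y) ^ s ∂ν ∂μ) ^ (1 / s) ≤
      (∫⁻ x, M x ^ ((s - 1) * u) ∂μ) ^ (1 / (s * u)) *
        (∫⁻ x, (∫⁻ y, F (x, y) ∂ν) ^ u' ∂μ) ^ (1 / (s * u')) := by
  have hslice : Measurable fun x => ∫⁻ y, F (x, y) ∂ν := hF.lintegral_prod_right'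
  have hpoint : ∫⁻ x, ∫⁻ y, F (x, y) ^ s ∂ν ∂μ ≤ ∫⁻ x, M x ^ (s - 1) * ∫⁻ y, F (x, y) ∂ν ∂μ := by
    refine lintegral_mono_ae ?_
    filter_upwards [hFM] with x hx
    exact lintegral_rpow_le_rpow_sub_one_mul (by fun_prop) hx hs
  have hholder := ENNReal.lintegral_mul_le_Lp_mul_Lq μ hu
    ((hM.pow_const (s - 1)).aemeasurable) hslice.aemeasurable
  simp only [Pi.mul_apply, ← ENNReal.rpow_mul] at hholder
  calc (∫⁻ x, ∫⁻ y, F (x, y) ^ s ∂ν ∂μ) ^ (1 / s)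
      ≤ ((∫⁻ x, M x ^ ((s - 1) * u) ∂μ) ^ (1 / u) *
          (∫⁻ x, (∫⁻ y, F (x, y) ∂ν) ^ u' ∂μ) ^ (1 / u')) ^ (1 / s) := by
        gcongr
        exact hpoint.trans hholder
    _ = _ := by
        rw [ENNReal.mul_rpow_of_nonneg _ _ (by positivity), ← ENNReal.rpow_mul,
          ← ENNReal.rpow_mul]
        congr 2 <;> field_simp

theorem lintegral_lintegral_lintegral_rpow_le_of_ae_le [SFinite μ] [SFinite ν]
    {F : α × β × γ → ℝ≥0∞} (hF : Measurable F) {M : α → ℝ≥0∞} (hM : Measurable M)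
    (hFM : ∀ᵐ z ∂ρ, ∀ᵐ x ∂μ, ∀ᵐ y ∂ν, F (x, y, z) ≤ M x)
    {s u u' : ℝ} (hs : 1 ≤ s) (hu : u.HolderConjugate u') :
    ∫⁻ z, (∫⁻ x, ∫⁻ y, F (x, y, z) ^ s ∂ν ∂μ) ^ (1 / s) ∂ρ ≤
      (∫⁻ x, M x ^ ((s - 1) * u) ∂μ) ^ (1 / (s * u)) *
        ∫⁻ z, (∫⁻ x, (∫⁻ y, F (x, y, z) ∂ν) ^ u' ∂μ) ^ (1 / (s * u')) ∂ρ := by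
  have hmeas : Measurable fun z => (∫⁻ x, (∫⁻ y, F (x, y, z) ∂ν) ^ u' ∂μ) ^ (1 / (s * u')) := by
    have hinner : Measurable fun q : γ × α => (∫⁻ y, F (q.2, y, q.1) ∂ν) ^ u' :=
      (hF.comp (by fun_prop : Measurable fun p : (γ × α) × β => (p.1.2, p.2, p.1.1))
        ).lintegral_prod_right'.pow_const _
    exact hinner.lintegral_prod_right'.pow_const _
  calc _ ≤ ∫⁻ z, (∫⁻ x, M x ^ ((s - 1) * u) ∂μ) ^ (1 / (s * u)) *
          (∫⁻ x, (∫⁻ y, F (x, y, z) ∂ν) ^ u' ∂μ) ^ (1 / (s * u')) ∂ρ := by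
        refine lintegral_mono_ae ?_
        filter_upwards [hFM] with z hz
        exact lintegral_lintegral_rpow_le_of_ae_le (F := fun p => F (p.1, p.2, z)) (by fun_prop)
          hM hz hs hu
    _ = _ := lintegral_const_mul _ hmeas

end MeasureTheory

theorem stmt_6_general (T s u u' : ℝ) (hs : 1 < s) (hu : 1 < u)
    (hu' : u' = u / (u - 1))
    (f : ℝ × ℝ × ℝ → ENNReal) (hf : Measurable f) :
    ∫⁻ x₂ : ℝ, (∫⁻ t in Set.Ioc (0 : ℝ) T, ∫⁻ x₁ : ℝ, f (t, x₁, x₂) ^ s) ^ (1 / s) ≤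
      (∫⁻ t in Set.Ioc (0 : ℝ) T,
          (essSup (fun x : ℝ × ℝ => f (t, x.1, x.2)) volume) ^ ((s - 1) * u)) ^ (1 / (s * u)) *
        ∫⁻ x₂ : ℝ,
          (∫⁻ t in Set.Ioc (0 : ℝ) T, (∫⁻ x₁ : ℝ, f (t, x₁, x₂)) ^ u') ^ (1 / (s * u')) := by
  have hconj : u.HolderConjugate u' := (Real.holderConjugate_iff_eq_conjExponent hu).2 hu'
  have hsup : ∀ᵐ x₂ : ℝ, ∀ᵐ t : ℝ, ∀ᵐ x₁ : ℝ,
      f (t, x₁, x₂) ≤ essSup (fun x : ℝ × ℝ => f (t, x.1, x.2)) volume :=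
    ae_ae_ae_of_ae_prod_prod (p := fun q => f q ≤ essSup (fun y => f (q.1, y)) volume)
      (ae_le_essSup_slice hf)
  refine lintegral_lintegral_lintegral_rpow_le_of_ae_le hf (measurable_essSup_slice hf) ?_
    hs.le hconj
  filter_upwards [hsup] with x₂ hx₂
  exact ae_restrict_of_ae hx₂

theorem stmt_6 (T s u u' : ℝ) (hT : 0 < T) (hs : 1 < s) (hu : 1 < u)
    (hu' : u' = u / (u - 1))
    (f : ℝ × ℝ × ℝ → ENNReal) (hf : Measurable f) :
    ∫⁻ x₂ : ℝ, (∫⁻ t in Set.Ioc (0 : ℝ) T, ∫⁻ x₁ : ℝ, f (t, x₁, x₂) ^ s) ^ (1 / s) ≤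
      (∫⁻ t in Set.Ioc (0 : ℝ) T,
          (essSup (fun x : ℝ × ℝ => f (t, x.1, x.2)) volume) ^ ((s - 1) * u)) ^ (1 / (s * u)) *
        ∫⁻ x₂ : ℝ,
          (∫⁻ t in Set.Ioc (0 : ℝ) T, (∫⁻ x₁ : ℝ, f (t, x₁, x₂)) ^ u') ^ (1 / (s * u')) :=
  stmt_6_general T s u u' hs hu hu' f hf
end
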